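/- arXiv:1501.05733 — 2 statements merged into one kernel-verified Lean document; each statement's English description precedes it below -/
import Mathlib

section
/- Let Y be a finite-dimensional inner product space, a > 0, b ≥ 0, and let Φ(u) = (a/2)‖u‖² + (b/4)‖u‖⁴ − Ψ(u) where Ψ is C¹. Suppose A : Y → Y satisfies, for each u, (a + b‖u‖²)⟨Au, w⟩ = ⟨Ψ'(u), w⟩ for all w ∈ Y. Then ⟨Φ'(u), u − Au⟩ = (a + b‖u‖²)‖u − Au‖² ≥ a‖u − Au‖², and ‖Φ'(u)‖ ≤ (a + b‖u‖²)‖u − Au‖ ≤ (a + b)(1 + ‖u‖²)‖u − Au‖ for all u ∈ Y. -/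
open scoped RealInnerProductSpace

/-! The derivative of `(a/2)‖·‖² + (b/4)‖·‖⁴` at `u` is `(a + b‖u‖²)⟪u, ·⟫`, and `A u` represents
`Ψ'(u)` with the same factor, so `Φ'(u) = (a + b‖u‖²)⟪u - A u, ·⟫`. Everything else follows from
`‖⟪v, ·⟫‖ = ‖v‖`. -/

section

variable {E : Type*} [NormedAddCommGroup E] [InnerProductSpace ℝ E]

theorem hasFDerivAt_kirchhoff_energy (a b : ℝ) (u : E) :
    HasFDerivAt (fun x : E => a / 2 * ‖x‖ ^ 2 + b / 4 * ‖x‖ ^ 4)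
      ((a + b * ‖u‖ ^ 2) • innerSL ℝ u) u := by
  have hsq : HasFDerivAt (fun x : E => ‖x‖ ^ 2) (2 • innerSL ℝ u) u := by
    simpa using (hasFDerivAt_id u).norm_sq
  have hquart : HasFDerivAt (fun x : E => (‖x‖ ^ 2) ^ 2)
      ((2 • (‖u‖ ^ 2) ^ 1) • 2 • innerSL ℝ u) u := hsq.pow 2
  have hpow : (fun x : E => a / 2 * ‖x‖ ^ 2 + b / 4 * ‖x‖ ^ 4)
      = fun x => a / 2 * ‖x‖ ^ 2 + b / 4 * (‖x‖ ^ 2) ^ 2 := by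
    funext x
    ring
  rw [hpow]
  refine ((hsq.const_mul (a / 2)).add (hquart.const_mul (b / 4))).congr_fderiv ?_
  ext w
  simp only [pow_one, nsmul_eq_mul, Nat.cast_ofNat, add_apply, smul_apply, innerSL_apply_apply,
    smul_eq_mul]
  ring

theorem kirchhoff_fderiv_eq_smul_innerSL_sub {a b : ℝ} {Ψ Φ : E → ℝ} {Ψ' Φ' : E →L[ℝ] ℝ}
    {u v : E} (hΨ : HasFDerivAt Ψ Ψ' u)
    (hΦdef : ∀ x, Φ x = a / 2 * ‖x‖ ^ 2 + b / 4 * ‖x‖ ^ 4 - Ψ x) (hΦ : HasFDerivAt Φ Φ' u)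
    (hv : ∀ w, (a + b * ‖u‖ ^ 2) * ⟪v, w⟫ = Ψ' w) :
    Φ' = (a + b * ‖u‖ ^ 2) • innerSL ℝ (u - v) := by
  have hΦfun : Φ = fun x => (a / 2 * ‖x‖ ^ 2 + b / 4 * ‖x‖ ^ 4) - Ψ x := funext hΦdef
  rw [hΦfun] at hΦ
  refine hΦ.unique (((hasFDerivAt_kirchhoff_energy a b u).sub hΨ).congr_fderiv ?_)
  ext w
  simp only [sub_apply, smul_apply, innerSL_apply_apply, smul_eq_mul, ← hv w, map_sub]
  ring

end

theorem stmt6_general {Y : Type*} [NormedAddCommGroup Y] [InnerProductSpace ℝ Y]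
    (a b : ℝ) (ha : 0 < a) (hb : 0 ≤ b)
    (Ψ Φ : Y → ℝ) (Ψ' Φ' : Y → Y →L[ℝ] ℝ)
    (hΨ : ∀ u, HasFDerivAt Ψ (Ψ' u) u)
    (hΦdef : ∀ u, Φ u = a / 2 * ‖u‖ ^ 2 + b / 4 * ‖u‖ ^ 4 - Ψ u)
    (hΦ : ∀ u, HasFDerivAt Φ (Φ' u) u)
    (A : Y → Y)
    (hA : ∀ u w : Y, (a + b * ‖u‖ ^ 2) * ⟪A u, w⟫ = Ψ' u w) :
    ∀ u : Y,
      Φ' u (u - A u) = (a + b * ‖u‖ ^ 2) * ‖u - A u‖ ^ 2 ∧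
      a * ‖u - A u‖ ^ 2 ≤ Φ' u (u - A u) ∧
      ‖Φ' u‖ ≤ (a + b * ‖u‖ ^ 2) * ‖u - A u‖ ∧
      (a + b * ‖u‖ ^ 2) * ‖u - A u‖ ≤ (a + b) * (1 + ‖u‖ ^ 2) * ‖u - A u‖ := by
  intro u
  have hΦ' := kirchhoff_fderiv_eq_smul_innerSL_sub (hΨ u) hΦdef (hΦ u) (hA u)
  have hcoeff : 0 ≤ a + b * ‖u‖ ^ 2 := by positivity
  have hval : Φ' u (u - A u) = (a + b * ‖u‖ ^ 2) * ‖u - A u‖ ^ 2 := by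
    rw [hΦ', smul_apply, innerSL_apply_apply, real_inner_self_eq_norm_sq, smul_eq_mul]
  refine ⟨hval, ?_, ?_, ?_⟩
  · rw [hval]
    gcongr
    exact le_add_of_nonneg_right (by positivity)
  · rw [hΦ', norm_smul, innerSL_apply_norm, Real.norm_of_nonneg hcoeff]
  · gcongr
    nlinarith [sq_nonneg ‖u‖]

/-- For the auxiliary operator `A` defined by
`(a + b‖u‖²)⟪Au, w⟫ = ⟨Ψ'(u), w⟩`, one has
`⟨Φ'(u), u − Au⟩ = (a + b‖u‖²)‖u − Au‖² ≥ a‖u − Au‖²` and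
`‖Φ'(u)‖ ≤ (a + b‖u‖²)‖u − Au‖ ≤ (a+b)(1+‖u‖²)‖u − Au‖`. -/
theorem stmt6 {Y : Type*} [NormedAddCommGroup Y] [InnerProductSpace ℝ Y]
    [FiniteDimensional ℝ Y] (a b : ℝ) (ha : 0 < a) (hb : 0 ≤ b)
    (Ψ Φ : Y → ℝ) (Ψ' Φ' : Y → Y →L[ℝ] ℝ)
    (hΨ : ∀ u, HasFDerivAt Ψ (Ψ' u) u)
    (hΦdef : ∀ u, Φ u = a / 2 * ‖u‖ ^ 2 + b / 4 * ‖u‖ ^ 4 - Ψ u)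
    (hΦ : ∀ u, HasFDerivAt Φ (Φ' u) u)
    (A : Y → Y)
    (hA : ∀ u w : Y, (a + b * ‖u‖ ^ 2) * ⟪A u, w⟫ = Ψ' u w) :
    ∀ u : Y,
      Φ' u (u - A u) = (a + b * ‖u‖ ^ 2) * ‖u - A u‖ ^ 2 ∧
      a * ‖u - A u‖ ^ 2 ≤ Φ' u (u - A u) ∧
      ‖Φ' u‖ ≤ (a + b * ‖u‖ ^ 2) * ‖u - A u‖ ∧
      (a + b * ‖u‖ ^ 2) * ‖u - A u‖ ≤ (a + b) * (1 + ‖u‖ ^ 2) * ‖u - A u‖ :=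
  stmt6_general a b ha hb Ψ Φ Ψ' Φ' hΨ hΦdef hΦ A hA
end

section
/- Let Y be a finite-dimensional Hilbert space, a > 0, b > 0, μ > 4, and Φ(u) = (a/2)‖u‖² + (b/4)‖u‖⁴ − ∫F, and suppose that b(1/4 − 1/μ)‖u‖⁴ ≤ |Φ(u)| + (2/μ)(a + b‖u‖²)‖u‖·‖u − Bu‖ for all u ∈ Y (obtained from Φ(u) − (1/μ)(a+b‖u‖²)⟨u, u − Au⟩), where ½‖u−Bu‖ ≤ ‖u−Au‖ ≤ 2‖u−Bu‖, and that ‖Φ'(u)‖ ≤ 2(a+b)(1+‖u‖²)‖u − Bu‖ for all u ∈ Y. Then for any c < d and α > 0 there exists β > 0 such that every u with Φ(u) ∈ [c,d] and ‖Φ'(u)‖ ≥ α satisfies ‖u − B(u)‖ ≥ β. -/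
set_option maxHeartbeats 1000000 in
/-- Lemma 3.7 of the paper: under the displayed estimates linking `Φ`, `Φ'`,
`A` and the regularized field `B`, for any `c < d` and `α > 0` there is `β > 0`
such that `Φ(u) ∈ [c,d]` and `‖Φ'(u)‖ ≥ α` force `‖u − B(u)‖ ≥ β`. -/
theorem stmt17 {Y : Type*} [NormedAddCommGroup Y] [InnerProductSpace ℝ Y]
    [FiniteDimensional ℝ Y] (a b μ : ℝ) (ha : 0 < a) (hb : 0 < b) (hμ : 4 < μ)
    (Φ : Y → ℝ) (Φ' : Y → Y →L[ℝ] ℝ) (hΦ : ∀ u, HasFDerivAt Φ (Φ' u) u)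
    (A B : Y → Y)
    (hAB : ∀ u, (1 / 2) * ‖u - B u‖ ≤ ‖u - A u‖ ∧ ‖u - A u‖ ≤ 2 * ‖u - B u‖)
    (hkey : ∀ u, b * (1 / 4 - 1 / μ) * ‖u‖ ^ 4 ≤
      |Φ u| + (2 / μ) * (a + b * ‖u‖ ^ 2) * ‖u‖ * ‖u - B u‖)
    (hgrad : ∀ u, ‖Φ' u‖ ≤ 2 * (a + b) * (1 + ‖u‖ ^ 2) * ‖u - B u‖) :
    ∀ c d α : ℝ, c < d → 0 < α → ∃ β > (0 : ℝ), ∀ u : Y,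
      Φ u ∈ Set.Icc c d → α ≤ ‖Φ' u‖ → β ≤ ‖u - B u‖ := by
  intro c d α hcd hα
  have hμ0 : (0:ℝ) < μ := by linarith
  -- opaque bound on |Φ u|
  obtain ⟨M, hM0, hMle⟩ : ∃ M : ℝ, 0 ≤ M ∧ ∀ x : ℝ, c ≤ x → x ≤ d → |x| ≤ M := by
    refine ⟨max |c| |d|, le_trans (abs_nonneg c) (le_max_left _ _), fun x h₁ h₂ => ?_⟩
    rw [abs_le]
    constructor
    · have := neg_abs_le c
      have h3 : -(max |c| |d|) ≤ -|c| := neg_le_neg (le_max_left _ _)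
      linarith
    · exact le_trans h₂ (le_trans (le_abs_self d) (le_max_right _ _))
  -- opaque κ
  obtain ⟨κ, hκ0, hκkey⟩ : ∃ κ : ℝ, 0 < κ ∧ ∀ u : Y, κ * ‖u‖ ^ 4 ≤
      |Φ u| + (2 / μ) * (a + b * ‖u‖ ^ 2) * ‖u‖ * ‖u - B u‖ := by
    refine ⟨b * (1 / 4 - 1 / μ), ?_, hkey⟩
    have h1 : 1 / μ < 1 / 4 := by
      rw [div_lt_div_iff₀ hμ0 (by norm_num)]; linarith
    have : (0:ℝ) < 1 / 4 - 1 / μ := by linarith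
    exact mul_pos hb this
  -- opaque R
  obtain ⟨R, hR1, hRbig⟩ : ∃ R : ℝ, 1 ≤ R ∧ (M + a / 2 + b / 2) / κ ≤ R :=
    ⟨max 1 ((M + a / 2 + b / 2) / κ), le_max_left _ _, le_max_right _ _⟩
  have hR0 : (0:ℝ) < R := lt_of_lt_of_le one_pos hR1
  have hab : (0:ℝ) < a + b := by linarith
  have hden : (0:ℝ) < 2 * (a + b) * (1 + R ^ 2) := by positivity
  refine ⟨min 1 (α / (2 * (a + b) * (1 + R ^ 2))), lt_min one_pos (by positivity), ?_⟩
  intro u hmem hgr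
  rcases le_or_gt 1 ‖u - B u‖ with h1 | h1
  · exact le_trans (min_le_left _ _) h1
  · have hs0 : (0:ℝ) ≤ ‖u‖ := norm_nonneg u
    have ht0 : (0:ℝ) ≤ ‖u - B u‖ := norm_nonneg _
    have hΦM : |Φ u| ≤ M := hMle _ hmem.1 hmem.2
    have hkeyu := hκkey u
    have h2μ : 2 / μ ≤ 1 / 2 := by
      rw [div_le_div_iff₀ hμ0 (by norm_num)]; linarith
    have h2μ0 : 0 ≤ 2 / μ := by positivity
    have hbound : κ * ‖u‖ ^ 4 ≤ M + (1 / 2) * (a + b * ‖u‖ ^ 2) * ‖u‖ := by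
      have hpos : (0:ℝ) ≤ (a + b * ‖u‖ ^ 2) * ‖u‖ := by positivity
      nlinarith [mul_nonneg hpos ht0, mul_nonneg h2μ0 hpos]
    have hsR : ‖u‖ ≤ R := by
      rcases le_or_gt ‖u‖ 1 with hs1 | hs1
      · linarith
      · have hcube3 : (1:ℝ) ≤ ‖u‖ ^ 3 := by nlinarith
        have hss : ‖u‖ ≤ ‖u‖ ^ 3 := by nlinarith
        have hMs : M ≤ M * ‖u‖ ^ 3 := by nlinarith
        have h2a : (1 / 2) * (a + b * ‖u‖ ^ 2) * ‖u‖ ≤ (a / 2 + b / 2) * ‖u‖ ^ 3 := by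
          nlinarith [mul_nonneg ha.le (by linarith : (0:ℝ) ≤ ‖u‖ ^ 3 - ‖u‖)]
        have hcube : κ * ‖u‖ ^ 4 ≤ (M + a / 2 + b / 2) * ‖u‖ ^ 3 := by linarith [hbound, hMs, h2a]
        have hs3 : (0:ℝ) < ‖u‖ ^ 3 := by positivity
        have hκs : κ * ‖u‖ ≤ M + a / 2 + b / 2 := by
          have h4 : κ * ‖u‖ * ‖u‖ ^ 3 ≤ (M + a / 2 + b / 2) * ‖u‖ ^ 3 := by linarith [hbound, hMs, h2a]
          exact le_of_mul_le_mul_right h4 hs3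
        have : ‖u‖ ≤ (M + a / 2 + b / 2) / κ := (le_div_iff₀ hκ0).mpr (by linarith)
        linarith
    have hs2 : ‖u‖ ^ 2 ≤ R ^ 2 := by nlinarith
    have hchain : α ≤ 2 * (a + b) * (1 + R ^ 2) * ‖u - B u‖ := by
      have h := hgrad u
      nlinarith [mul_nonneg (mul_nonneg (by linarith : (0:ℝ) ≤ 2 * (a + b))
        (by nlinarith : (0:ℝ) ≤ R ^ 2 - ‖u‖ ^ 2)) ht0]
    have : α / (2 * (a + b) * (1 + R ^ 2)) ≤ ‖u - B u‖ := by
      rw [div_le_iff₀ hden]; linarith [mul_comm (‖u - B u‖) (2 * (a + b) * (1 + R ^ 2))]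
    exact le_trans (min_le_right _ _) this
end
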